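/- arXiv:2601.14158 — 2 statements merged into one kernel-verified Lean document; each statement's English description precedes it below -/
import Mathlib

section
/- Let C be a Hermitian matrix on ℂ^{d1}⊗ℂ^{d2} with eigenvalues λ1 ≥ … ≥ λ_{d1d2}. For every unitarily invariant norm ‖·‖ on d1×d1 complex matrices (a matrix norm satisfying ‖UAV‖ = ‖A‖ for all unitaries U, V), one has ‖tr_2[C]‖ ≤ ‖D2‖, where D2 is the d1×d1 diagonal matrix with diagonal entries (Σ_{s=1}^{d2} λ_{(j−1)d2+s})_{j=1}^{d1}; and for every unitarily invariant norm on d2×d2 complex matrices, ‖tr_1[C]‖ ≤ ‖D1‖, where D1 is the d2×d2 diagonal matrix with diagonal entries (Σ_{s=1}^{d1} λ_{(i−1)d1+s})_{i=1}^{d2}. -/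
open Matrix Finset Kronecker
open scoped ComplexOrder

/-- The first partial trace of a matrix on `ℂ^{d1} ⊗ ℂ^{d2}` (index pairs `(i,s)` ordered
lexicographically): `(tr_1 C)_{s,t} = ∑_i C_{(i,s),(i,t)}`. -/
noncomputable def ptrace1 {d1 d2 : ℕ} (C : Matrix (Fin d1 × Fin d2) (Fin d1 × Fin d2) ℂ) :
    Matrix (Fin d2) (Fin d2) ℂ :=
  Matrix.of fun s t => ∑ i : Fin d1, C (i, s) (i, t)

/-- The second partial trace: `(tr_2 C)_{i,j} = ∑_s C_{(i,s),(j,s)}`. -/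
noncomputable def ptrace2 {d1 d2 : ℕ} (C : Matrix (Fin d1 × Fin d2) (Fin d1 × Fin d2) ℂ) :
    Matrix (Fin d1) (Fin d1) ℂ :=
  Matrix.of fun i j => ∑ s : Fin d2, C (i, s) (j, s)

/-- The sum of the `k` largest entries of the vector `x` (the largest value of a sum of `k`
entries of `x`), i.e. `∑_{i=1}^k x_i^↓`. -/
noncomputable def maxSum {ι : Type*} [Fintype ι] (x : ι → ℝ) (k : ℕ) : ℝ :=
  sSup {s : ℝ | ∃ A : Finset ι, A.card = k ∧ s = ∑ i ∈ A, x i}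

/-- `x ≺ y` (majorization): for every `k`, the sum of the `k` largest entries of `x` is at
most the sum of the `k` largest entries of `y`, and the total sums are equal. -/
def Majorizes {ι κ : Type*} [Fintype ι] [Fintype κ] (x : ι → ℝ) (y : κ → ℝ) : Prop :=
  (∀ k : ℕ, maxSum x k ≤ maxSum y k) ∧ ∑ i, x i = ∑ j, y j

/-- `x ≺_w y` (weak majorization). -/
def WeakMajorizes {ι κ : Type*} [Fintype ι] [Fintype κ] (x : ι → ℝ) (y : κ → ℝ) : Prop :=
  ∀ k : ℕ, maxSum x k ≤ maxSum y k

/-!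
The eigenvalues of `tr₂ C` are majorized by the block sums `w j = ∑ₛ λ_{(j-1)d₂+s}`: for a set `S`
of eigenvectors of `tr₂ C`, the sum of their eigenvalues is `tr (C (P_S ⊗ 1))` with `P_S` the
projection onto their span, and by Ky Fan's maximum principle this is at most the sum of the
`|S| d₂` largest eigenvalues of `C`, i.e. of the `|S|` largest `w j`. A vector majorized by `w`
lies in the convex hull of the permutations of `w` (a separating functional would contradict Abel
summation after sorting), and a unitarily invariant norm is convex and invariant under permuting
diagonal entries, so on that hull it is largest at `diagonal w`. `tr₁` is `tr₂` with the tensor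
factors exchanged.
-/

section PrefixSum

variable {n : ℕ}

def prefixSum (x : Fin n → ℝ) (k : ℕ) : ℝ := ∑ i ∈ ({i | (i : ℕ) < k} : Finset (Fin n)), x i

@[simp]
lemma prefixSum_zero (x : Fin n → ℝ) : prefixSum x 0 = 0 := by
  simp [prefixSum]

lemma prefixSum_of_le (x : Fin n → ℝ) {k : ℕ} (hk : n ≤ k) : prefixSum x k = ∑ i, x i := by
  rw [prefixSum, Finset.filter_true_of_mem fun i _ => i.2.trans_le hk]

lemma prefixSum_succ (x : Fin n → ℝ) {k : ℕ} (hk : k < n) :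
    prefixSum x (k + 1) = prefixSum x k + x ⟨k, hk⟩ := by
  have : ({i | (i : ℕ) < k + 1} : Finset (Fin n)) =
      insert ⟨k, hk⟩ ({i | (i : ℕ) < k} : Finset (Fin n)) := by
    ext i
    simp only [Order.lt_add_one_iff, Finset.mem_filter, Finset.mem_univ, true_and,
      Finset.mem_insert, Fin.ext_iff]
    omega
  rw [prefixSum, prefixSum, this, Finset.sum_insert (by simp), add_comm]

lemma card_filter_val_lt_of_le {k : ℕ} (hk : k ≤ n) :
    ({i | (i : ℕ) < k} : Finset (Fin n)).card = k := by
  rw [Fin.card_filter_val_lt, min_eq_right hk]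

lemma prefixSum_le_min {t : Fin n → ℝ} (h0 : ∀ i, 0 ≤ t i) (h1 : ∀ i, t i ≤ 1) (m : ℕ) :
    prefixSum t m ≤ min (m : ℝ) (∑ i, t i) := by
  refine le_min ?_ (Finset.sum_le_sum_of_subset_of_nonneg (Finset.subset_univ _)
    fun i _ _ => h0 i)
  calc prefixSum t m ≤ ({i | (i : ℕ) < m} : Finset (Fin n)).card • (1 : ℝ) :=
        Finset.sum_le_card_nsmul _ _ _ fun i _ => h1 i
    _ ≤ m := by simp [Fin.card_filter_val_lt]

lemma sum_mul_nonpos_of_antitone {a u : Fin n → ℝ} (ha : Antitone a)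
    (hu : ∀ m ≤ n, prefixSum u m ≤ 0) (hu_sum : ∑ i, u i = 0) :
    ∑ i, a i * u i ≤ 0 := by
  have key : ∀ k (hk : k < n),
      prefixSum (fun i => a i * u i) (k + 1) ≤ a ⟨k, hk⟩ * prefixSum u (k + 1) := by
    intro k
    induction k with
    | zero =>
      intro hk
      simp [prefixSum_succ _ hk]
    | succ k ih =>
      intro hk
      have ha_succ : a ⟨k + 1, hk⟩ ≤ a ⟨k, by omega⟩ := ha (Fin.mk_le_mk.mpr (by omega))
      have hu_succ := hu (k + 1) (by omega)
      rw [prefixSum_succ _ hk, prefixSum_succ u hk]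
      nlinarith [ih (by omega)]
  rcases n with _ | k
  · simp
  · simpa [prefixSum_of_le _ le_rfl, hu_sum] using key k (by omega)

lemma sum_mul_le_prefixSum {μ t : Fin n → ℝ} (hμ : Antitone μ) (h0 : ∀ i, 0 ≤ t i)
    (h1 : ∀ i, t i ≤ 1) {K : ℕ} (ht : ∑ i, t i = K) :
    ∑ i, μ i * t i ≤ prefixSum μ K := by
  have hK : K ≤ n := by
    have : ∑ i, t i ≤ n := by simpa using Finset.sum_le_card_nsmul univ t 1 fun i _ => h1 i
    exact_mod_cast ht ▸ this
  set ind : Fin n → ℝ := fun i => if (i : ℕ) < K then 1 else 0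
  have hind : ∀ m, prefixSum ind m = min (m : ℝ) K := by
    intro m
    rw [prefixSum, Finset.sum_boole, Finset.filter_filter]
    simp only [← lt_min_iff]
    rw [card_filter_val_lt_of_le ((min_le_right _ _).trans hK)]
    push_cast
    rfl
  have hprefix : ∀ m, prefixSum (fun i => t i - ind i) m ≤ 0 := by
    intro m
    rw [prefixSum, Finset.sum_sub_distrib, ← prefixSum, ← prefixSum, hind, ← ht]
    linarith [prefixSum_le_min h0 h1 m]
  have htotal : ∑ i, (t i - ind i) = 0 := by
    rw [Finset.sum_sub_distrib, ← prefixSum_of_le ind le_rfl, hind, ht,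
      min_eq_right (by exact_mod_cast hK), sub_self]
  have hμ_ind : ∑ i, μ i * ind i = prefixSum μ K := by
    simp [ind, prefixSum, Finset.sum_filter]
  have habel := sum_mul_nonpos_of_antitone hμ (fun m _ => hprefix m) htotal
  simp only [mul_sub, Finset.sum_sub_distrib, hμ_ind] at habel
  linarith

lemma prefixSum_blockSum {d1 d2 : ℕ} (μ : Fin (d1 * d2) → ℝ) (k : ℕ) :
    prefixSum (fun j : Fin d1 => ∑ s : Fin d2, μ (finProdFinEquiv (j, s))) k =
      prefixSum μ (k * d2) := by
  have key : ∀ (j : Fin d1) (s : Fin d2),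
      (finProdFinEquiv (j, s) : ℕ) < k * d2 ↔ (j : ℕ) < k := by
    intro j s
    have := s.2
    rw [finProdFinEquiv_apply_val]
    constructor <;> intro h
    · by_contra hk
      nlinarith [not_lt.mp hk]
    · nlinarith
  simp only [prefixSum, Finset.sum_filter]
  rw [← Equiv.sum_comp finProdFinEquiv, Fintype.sum_prod_type]
  simp only [key]
  refine Finset.sum_congr rfl fun j _ => ?_
  split_ifs <;> simp

end PrefixSum

section Permutohedron

variable {n : ℕ} {x w : Fin n → ℝ}

lemma exists_perm_sum_mul_le (hmaj : ∀ S : Finset (Fin n), ∑ j ∈ S, x j ≤ prefixSum w S.card)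
    (hsum : ∑ j, x j = ∑ j, w j) (c : Fin n → ℝ) :
    ∃ σ : Equiv.Perm (Fin n), ∑ i, c i * x i ≤ ∑ i, c i * w (σ i) := by
  set τ := Tuple.sort (OrderDual.toDual ∘ c)
  have hc : Antitone (c ∘ τ) := monotone_toDual_comp_iff.mp (Tuple.monotone_sort _)
  have hprefix : ∀ m ≤ n, prefixSum (fun i => x (τ i) - w i) m ≤ 0 := by
    intro m hm
    have := hmaj (Finset.image τ {i | (i : ℕ) < m})
    rw [Finset.card_image_of_injective _ τ.injective, card_filter_val_lt_of_le hm,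
      Finset.sum_image τ.injective.injOn] at this
    rw [prefixSum, Finset.sum_sub_distrib]
    exact sub_nonpos.mpr this
  have htotal : ∑ i, (x (τ i) - w i) = 0 := by
    rw [Finset.sum_sub_distrib, Equiv.sum_comp τ x, hsum, sub_self]
  have habel := sum_mul_nonpos_of_antitone hc hprefix htotal
  simp only [Function.comp_apply, mul_sub, Finset.sum_sub_distrib] at habel
  refine ⟨τ.symm, ?_⟩
  calc ∑ i, c i * x i = ∑ i, c (τ i) * x (τ i) := (Equiv.sum_comp τ fun i => c i * x i).symm
    _ ≤ ∑ i, c (τ i) * w i := by linarith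
    _ = ∑ i, c i * w (τ.symm i) := by
      simpa using Equiv.sum_comp τ fun i => c i * w (τ.symm i)

lemma mem_convexHull_perm_of_majorized
    (hmaj : ∀ S : Finset (Fin n), ∑ j ∈ S, x j ≤ prefixSum w S.card)
    (hsum : ∑ j, x j = ∑ j, w j) :
    x ∈ convexHull ℝ (Set.range fun σ : Equiv.Perm (Fin n) => w ∘ σ) := by
  by_contra hx
  obtain ⟨f, u, hf, hfx⟩ := geometric_hahn_banach_closed_point (convex_convexHull ℝ _)
    ((Set.finite_range _).isCompact_convexHull (𝕜 := ℝ)).isClosed hx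
  set c : Fin n → ℝ := fun i => f fun j => if i = j then 1 else 0
  have hf_apply : ∀ y, f y = ∑ i, c i * y i := fun y => by
    simpa [c, mul_comm] using LinearMap.pi_apply_eq_sum_univ f.toLinearMap y
  obtain ⟨σ, hσ⟩ := exists_perm_sum_mul_le hmaj hsum c
  have := hf (w ∘ σ) (subset_convexHull ℝ _ ⟨σ, rfl⟩)
  rw [hf_apply] at this hfx
  simp only [Function.comp_apply] at this
  linarith

end Permutohedron

section UnitaryMatrices

variable {ι κ : Type*} [Fintype ι] [DecidableEq ι] [Fintype κ] [DecidableEq κ]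

lemma permMatrix_mem_unitaryGroup (σ : Equiv.Perm ι) : σ.permMatrix ℂ ∈ unitaryGroup ι ℂ := by
  rw [mem_unitaryGroup_iff, star_eq_conjTranspose, conjTranspose_permMatrix, ← permMatrix_mul,
    inv_mul_cancel, permMatrix_one]

lemma permMatrix_mul_diagonal_mul_permMatrix_inv (d : ι → ℂ) (σ : Equiv.Perm ι) :
    σ.permMatrix ℂ * diagonal d * σ⁻¹.permMatrix ℂ = diagonal (d ∘ σ) := by
  rw [PEquiv.toMatrix_toPEquiv_mul, PEquiv.mul_toMatrix_toPEquiv]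
  exact submatrix_diagonal_equiv d σ

lemma submatrix_mem_unitaryGroup {W : Matrix ι ι ℂ} (hW : W ∈ unitaryGroup ι ℂ) (e : κ ≃ ι) :
    W.submatrix e e ∈ unitaryGroup κ ℂ := by
  rw [mem_unitaryGroup_iff, star_eq_conjTranspose, conjTranspose_submatrix, submatrix_mul_equiv,
    ← star_eq_conjTranspose, mem_unitaryGroup_iff.mp hW, submatrix_one_equiv]

lemma submatrix_conj_diagonal (W : Matrix ι ι ℂ) (ν : ι → ℝ) (e : κ ≃ ι) :
    (W * diagonal (fun m => (ν m : ℂ)) * Wᴴ).submatrix e e =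
      W.submatrix e e * diagonal (fun q => (ν (e q) : ℂ)) * (W.submatrix e e)ᴴ := by
  rw [← submatrix_mul_equiv _ _ _ e, ← submatrix_mul_equiv _ _ _ e, submatrix_diagonal_equiv,
    conjTranspose_submatrix]
  rfl

lemma isHermitian_conj_diagonal (W : Matrix ι ι ℂ) (ν : ι → ℝ) :
    (W * diagonal (fun m => (ν m : ℂ)) * Wᴴ).IsHermitian :=
  isHermitian_mul_mul_conjTranspose W (isHermitian_diagonal_of_self_adjoint _ (by ext; simp))

lemma sum_normSq_row_eq_one {Z : Matrix ι ι ℂ} (hZ : Z ∈ unitaryGroup ι ℂ) (i : ι) :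
    ∑ j, Complex.normSq (Z i j) = 1 := by
  have h := congr_fun (congr_fun (mem_unitaryGroup_iff.mp hZ) i) i
  simp only [mul_apply, star_apply, Complex.star_def, Complex.mul_conj, one_apply_eq] at h
  exact_mod_cast h

lemma sum_normSq_col_eq_one {Z : Matrix ι ι ℂ} (hZ : Z ∈ unitaryGroup ι ℂ) (j : ι) :
    ∑ i, Complex.normSq (Z i j) = 1 := by
  have h := congr_fun (congr_fun (mem_unitaryGroup_iff'.mp hZ) j) j
  simp only [mul_apply, star_apply, Complex.star_def, mul_comm (starRingEnd ℂ _),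
    Complex.mul_conj, one_apply_eq] at h
  exact_mod_cast h

lemma re_conjTranspose_mul_diagonal_mul_apply_self (Z : Matrix ι ι ℂ) (ν : ι → ℝ) (p : ι) :
    ((Zᴴ * diagonal (fun m => (ν m : ℂ)) * Z) p p).re = ∑ m, ν m * Complex.normSq (Z m p) := by
  simp only [mul_apply, conjTranspose_apply, diagonal_apply, mul_ite, mul_zero,
    Finset.sum_ite_eq', Finset.mem_univ, if_true, Complex.re_sum]
  refine Finset.sum_congr rfl fun m _ => ?_
  rw [Complex.star_def, mul_comm, ← mul_assoc, Complex.mul_conj, ← Complex.ofReal_mul,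
    Complex.ofReal_re, mul_comm]

/-- Ky Fan's maximum principle. -/
lemma sum_re_diag_conj_le_prefixSum {C W U : Matrix ι ι ℂ} {ν : ι → ℝ}
    (hW : W ∈ unitaryGroup ι ℂ) (hC : C = W * diagonal (fun m => (ν m : ℂ)) * Wᴴ)
    {k : ℕ} {μ : Fin k → ℝ} (hμ : Antitone μ) (g : Fin k ≃ ι) (hg : ∀ i, μ i = ν (g i))
    (hU : U ∈ unitaryGroup ι ℂ) (T : Finset ι) :
    ∑ p ∈ T, ((Uᴴ * C * U) p p).re ≤ prefixSum μ T.card := by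
  set Z := Wᴴ * U
  have hZ : Z ∈ unitaryGroup ι ℂ := mul_mem (Unitary.star_mem hW) hU
  have hconj : Uᴴ * C * U = Zᴴ * diagonal (fun m => (ν m : ℂ)) * Z := by
    simp only [Z, hC, conjTranspose_mul, conjTranspose_conjTranspose, Matrix.mul_assoc]
  set t : ι → ℝ := fun m => ∑ p ∈ T, Complex.normSq (Z m p)
  have ht0 : ∀ m, 0 ≤ t m := fun m => Finset.sum_nonneg fun p _ => Complex.normSq_nonneg _
  have ht1 : ∀ m, t m ≤ 1 := fun m => sum_normSq_row_eq_one hZ m ▸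
    Finset.sum_le_sum_of_subset_of_nonneg (Finset.subset_univ T)
      fun p _ _ => Complex.normSq_nonneg _
  have ht : ∑ i, t (g i) = T.card := by
    simp only [Equiv.sum_comp g t, t]
    rw [Finset.sum_comm]
    simp [sum_normSq_col_eq_one hZ]
  calc ∑ p ∈ T, ((Uᴴ * C * U) p p).re = ∑ i, μ i * t (g i) := by
        simp only [hconj, re_conjTranspose_mul_diagonal_mul_apply_self, hg, t, Finset.mul_sum]
        rw [Finset.sum_comm, Equiv.sum_comp g fun m => ∑ p ∈ T, ν m * Complex.normSq (Z m p)]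
    _ ≤ prefixSum μ T.card := sum_mul_le_prefixSum hμ (fun i => ht0 _) (fun i => ht1 _) ht

end UnitaryMatrices

section UnitarilyInvariant

def IsUnitarilyInvariant {ι : Type*} [Fintype ι] [DecidableEq ι] (f : Matrix ι ι ℂ → ℝ) : Prop :=
  ∀ U V A : Matrix ι ι ℂ, U ∈ unitaryGroup ι ℂ → V ∈ unitaryGroup ι ℂ → f (U * A * V) = f A

namespace IsUnitarilyInvariant

variable {ι : Type*} [Fintype ι] [DecidableEq ι] {f : Matrix ι ι ℂ → ℝ}

lemma apply_diagonal_comp_perm (hf : IsUnitarilyInvariant f) (d : ι → ℂ) (σ : Equiv.Perm ι) :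
    f (diagonal (d ∘ σ)) = f (diagonal d) := by
  rw [← permMatrix_mul_diagonal_mul_permMatrix_inv]
  exact hf _ _ _ (permMatrix_mem_unitaryGroup σ) (permMatrix_mem_unitaryGroup σ⁻¹)

lemma apply_eq_apply_diagonal_eigenvalues (hf : IsUnitarilyInvariant f) {A : Matrix ι ι ℂ}
    (hA : A.IsHermitian) : f A = f (diagonal fun i => (hA.eigenvalues i : ℂ)) := by
  conv_lhs => rw [hA.spectral_theorem, Unitary.conjStarAlgAut_apply]
  exact hf _ _ _ hA.eigenvectorUnitary.2 (Unitary.star_mem hA.eigenvectorUnitary.2)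

end IsUnitarilyInvariant

variable {n : ℕ} (p : Seminorm ℂ (Matrix (Fin n) (Fin n) ℂ))

lemma Seminorm.apply_diagonal_le_of_majorized (hp : IsUnitarilyInvariant p) {x w : Fin n → ℝ}
    (hmaj : ∀ S : Finset (Fin n), ∑ j ∈ S, x j ≤ prefixSum w S.card)
    (hsum : ∑ j, x j = ∑ j, w j) :
    p (diagonal fun i => (x i : ℂ)) ≤ p (diagonal fun i => (w i : ℂ)) := by
  let φ : (Fin n → ℝ) →ₗ[ℝ] Matrix (Fin n) (Fin n) ℂ := (diagonalLinearMap (Fin n) ℝ ℂ).comp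
    (LinearMap.pi fun i => Complex.ofRealCLM.toLinearMap.comp (LinearMap.proj i))
  obtain ⟨_, ⟨σ, rfl⟩, hσ⟩ := (p.convexOn.comp_linearMap φ).exists_ge_of_mem_convexHull
    (Set.subset_univ _) (mem_convexHull_perm_of_majorized hmaj hsum)
  calc p (diagonal fun i => (x i : ℂ)) ≤ p (diagonal ((fun i => (w i : ℂ)) ∘ σ)) := hσ
    _ = p (diagonal fun i => (w i : ℂ)) := hp.apply_diagonal_comp_perm _ σ

lemma Seminorm.apply_le_of_eigenvalues_majorized (hp : IsUnitarilyInvariant p)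
    {A : Matrix (Fin n) (Fin n) ℂ} (hA : A.IsHermitian) {w : Fin n → ℝ}
    (hmaj : ∀ S : Finset (Fin n), ∑ j ∈ S, hA.eigenvalues j ≤ prefixSum w S.card)
    (hsum : ∑ j, hA.eigenvalues j = ∑ j, w j) :
    p A ≤ p (diagonal fun i => (w i : ℂ)) :=
  hp.apply_eq_apply_diagonal_eigenvalues hA ▸ p.apply_diagonal_le_of_majorized hp hmaj hsum

end UnitarilyInvariant

section PartialTrace

variable {d1 d2 : ℕ}

lemma ptrace2_isHermitian {C : Matrix (Fin d1 × Fin d2) (Fin d1 × Fin d2) ℂ}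
    (hC : C.IsHermitian) : (ptrace2 C).IsHermitian := by
  ext i j
  simp only [ptrace2, conjTranspose_apply, of_apply, star_sum]
  exact Finset.sum_congr rfl fun s _ => congr_fun (congr_fun hC (i, s)) (j, s)

lemma trace_ptrace2 (C : Matrix (Fin d1 × Fin d2) (Fin d1 × Fin d2) ℂ) :
    (ptrace2 C).trace = C.trace := by
  simp [trace, ptrace2, Fintype.sum_prod_type]

lemma ptrace2_conj_kronecker_one (C : Matrix (Fin d1 × Fin d2) (Fin d1 × Fin d2) ℂ)
    (V : Matrix (Fin d1) (Fin d1) ℂ) :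
    ptrace2 ((V ⊗ₖ (1 : Matrix (Fin d2) (Fin d2) ℂ))ᴴ * C * (V ⊗ₖ 1)) = Vᴴ * ptrace2 C * V := by
  ext i j
  simp only [ptrace2, mul_apply, conjTranspose_apply, kroneckerMap_apply, one_apply, mul_ite,
    mul_one, mul_zero, RCLike.star_def, apply_ite (starRingEnd ℂ), map_zero, ite_mul, zero_mul,
    Fintype.sum_prod_type, Finset.sum_ite_eq', Finset.mem_univ, ↓reduceIte, Finset.sum_mul,
    of_apply, Finset.mul_sum]
  rw [Finset.sum_comm]
  exact Finset.sum_congr rfl fun _ _ => Finset.sum_comm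

variable {C W : Matrix (Fin d1 × Fin d2) (Fin d1 × Fin d2) ℂ} {ν : Fin d1 × Fin d2 → ℝ}
  {μ : Fin (d1 * d2) → ℝ}

lemma sum_eigenvalues_ptrace2_le (hW : W ∈ unitaryGroup (Fin d1 × Fin d2) ℂ)
    (hC : C = W * diagonal (fun m => (ν m : ℂ)) * Wᴴ) (hμ : Antitone μ)
    (g : Fin (d1 * d2) ≃ Fin d1 × Fin d2) (hg : ∀ k, μ k = ν (g k))
    (hA : (ptrace2 C).IsHermitian) (S : Finset (Fin d1)) :
    ∑ j ∈ S, hA.eigenvalues j ≤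
      prefixSum (fun j => ∑ s : Fin d2, μ (finProdFinEquiv (j, s))) S.card := by
  set V : Matrix (Fin d1) (Fin d1) ℂ := (hA.eigenvectorUnitary : Matrix (Fin d1) (Fin d1) ℂ)
  set Y : Matrix (Fin d1 × Fin d2) (Fin d1 × Fin d2) ℂ := V ⊗ₖ 1
  have hY : Y ∈ unitaryGroup (Fin d1 × Fin d2) ℂ :=
    kronecker_mem_unitary hA.eigenvectorUnitary.2 (one_mem _)
  have hdiag : ∀ j, hA.eigenvalues j = ∑ s, ((Yᴴ * C * Y) (j, s) (j, s)).re := by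
    intro j
    have h := hA.conjStarAlgAut_star_eigenvectorUnitary
    rw [Unitary.conjStarAlgAut_star_apply, star_eq_conjTranspose,
      ← ptrace2_conj_kronecker_one] at h
    simpa [ptrace2, Y, V] using congrArg Complex.re (congr_fun (congr_fun h j) j).symm
  calc ∑ j ∈ S, hA.eigenvalues j = ∑ p ∈ S ×ˢ Finset.univ, ((Yᴴ * C * Y) p p).re := by
        simp [Finset.sum_product, hdiag]
    _ ≤ prefixSum μ (S ×ˢ (Finset.univ : Finset (Fin d2))).card :=
        sum_re_diag_conj_le_prefixSum hW hC hμ g hg hY _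
    _ = _ := by rw [Finset.card_product, Finset.card_univ, Fintype.card_fin, prefixSum_blockSum]

lemma sum_eigenvalues_ptrace2_eq (hW : W ∈ unitaryGroup (Fin d1 × Fin d2) ℂ)
    (hC : C = W * diagonal (fun m => (ν m : ℂ)) * Wᴴ)
    (g : Fin (d1 * d2) ≃ Fin d1 × Fin d2) (hg : ∀ k, μ k = ν (g k))
    (hA : (ptrace2 C).IsHermitian) :
    ∑ j, hA.eigenvalues j = ∑ j, ∑ s : Fin d2, μ (finProdFinEquiv (j, s)) := by
  have htrace : C.trace = ∑ p, (ν p : ℂ) := by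
    rw [hC, trace_mul_cycle, ← star_eq_conjTranspose, mem_unitaryGroup_iff'.mp hW,
      Matrix.one_mul, trace_diagonal]
  have h := hA.trace_eq_sum_eigenvalues
  rw [trace_ptrace2, htrace, ← Equiv.sum_comp g] at h
  simp only [← hg] at h
  rw [← Fintype.sum_prod_type', Equiv.sum_comp finProdFinEquiv μ]
  simpa using congrArg RCLike.re h.symm

lemma Seminorm.apply_ptrace2_le (p : Seminorm ℂ (Matrix (Fin d1) (Fin d1) ℂ))
    (hp : IsUnitarilyInvariant p) (hW : W ∈ unitaryGroup (Fin d1 × Fin d2) ℂ)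
    (hC : C = W * diagonal (fun m => (ν m : ℂ)) * Wᴴ) (hμ : Antitone μ)
    (g : Fin (d1 * d2) ≃ Fin d1 × Fin d2) (hg : ∀ k, μ k = ν (g k)) :
    p (ptrace2 C) ≤ p (diagonal fun j => ((∑ s : Fin d2, μ (finProdFinEquiv (j, s)) : ℝ) : ℂ)) :=
  have hA := ptrace2_isHermitian (hC ▸ isHermitian_conj_diagonal W ν)
  p.apply_le_of_eigenvalues_majorized hp hA (sum_eigenvalues_ptrace2_le hW hC hμ g hg hA)
    (sum_eigenvalues_ptrace2_eq hW hC g hg hA)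

end PartialTrace

theorem unitarily_invariant_norm_bound (d1 d2 : ℕ)
    (C : Matrix (Fin d1 × Fin d2) (Fin d1 × Fin d2) ℂ) (hC : C.IsHermitian)
    -- `μ` lists the eigenvalues of `C` in decreasing order
    (μ : Fin (d1 * d2) → ℝ) (hμ : Antitone μ)
    (g : Fin (d1 * d2) ≃ Fin d1 × Fin d2) (hg : ∀ k, μ k = hC.eigenvalues (g k)) :
    (∀ N : Matrix (Fin d1) (Fin d1) ℂ → ℝ,
      (∀ A B, N (A + B) ≤ N A + N B) →
      (∀ (a : ℂ) A, N (a • A) = ‖a‖ * N A) →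
      (∀ A, N A = 0 → A = 0) →
      (∀ (U V A : Matrix (Fin d1) (Fin d1) ℂ), U ∈ Matrix.unitaryGroup (Fin d1) ℂ →
        V ∈ Matrix.unitaryGroup (Fin d1) ℂ → N (U * A * V) = N A) →
      N (ptrace2 C) ≤
        N (Matrix.diagonal fun j : Fin d1 =>
            ((∑ s : Fin d2, μ (finProdFinEquiv (j, s)) : ℝ) : ℂ))) ∧
    (∀ N : Matrix (Fin d2) (Fin d2) ℂ → ℝ,
      (∀ A B, N (A + B) ≤ N A + N B) →
      (∀ (a : ℂ) A, N (a • A) = ‖a‖ * N A) →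
      (∀ A, N A = 0 → A = 0) →
      (∀ (U V A : Matrix (Fin d2) (Fin d2) ℂ), U ∈ Matrix.unitaryGroup (Fin d2) ℂ →
        V ∈ Matrix.unitaryGroup (Fin d2) ℂ → N (U * A * V) = N A) →
      N (ptrace1 C) ≤
        N (Matrix.diagonal fun i : Fin d2 =>
            ((∑ s : Fin d1, μ (finCongr (Nat.mul_comm d2 d1) (finProdFinEquiv (i, s))) : ℝ) : ℂ))) := by
  set W : Matrix (Fin d1 × Fin d2) (Fin d1 × Fin d2) ℂ :=
    (hC.eigenvectorUnitary : Matrix (Fin d1 × Fin d2) (Fin d1 × Fin d2) ℂ)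
  have hW : W ∈ unitaryGroup (Fin d1 × Fin d2) ℂ := hC.eigenvectorUnitary.2
  have hdecomp : C = W * diagonal (fun p => (hC.eigenvalues p : ℂ)) * Wᴴ := by
    simpa [Unitary.conjStarAlgAut_apply, star_eq_conjTranspose, Function.comp_def] using
      hC.spectral_theorem
  refine ⟨fun N hadd hsmul _ hinv =>
    (Seminorm.of N hadd hsmul).apply_ptrace2_le hinv hW hdecomp hμ g hg,
    fun N hadd hsmul _ hinv => ?_⟩
  set e := Equiv.prodComm (Fin d2) (Fin d1)
  -- `ptrace1 C` is definitionally `ptrace2 (C.submatrix e e)`.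
  exact (Seminorm.of N hadd hsmul).apply_ptrace2_le (C := C.submatrix e e)
    (μ := fun k => μ (finCongr (Nat.mul_comm d2 d1) k)) hinv (submatrix_mem_unitaryGroup hW e)
    (by rw [hdecomp, submatrix_conj_diagonal]) (fun _ _ hkl => hμ hkl)
    ((finCongr (Nat.mul_comm d2 d1)).trans (g.trans e.symm)) (fun k => by simp [e, hg])
end

section
/- For every complex matrix C on ℂ^{d1}⊗ℂ^{d2} with singular values σ1 ≥ … ≥ σ_{d1d2}, the vector of singular values of tr_2[C] is weakly majorized by the vector (Σ_{s=1}^{d2} σ_{(j−1)d2+s})_{j=1}^{d1} ∈ ℝ^{d1}, and the vector of singular values of tr_1[C] is weakly majorized by the vector (Σ_{s=1}^{d1} σ_{(i−1)d1+s})_{i=1}^{d2} ∈ ℝ^{d2}. -/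
open Matrix Finset Kronecker
open scoped ComplexOrder

/-- The singular values of a square complex matrix `A`: the (unordered) family of eigenvalues
of `√(AᴴA)`, i.e. the square roots of the eigenvalues of `AᴴA`. -/
noncomputable def singvals {n : Type*} [Fintype n] [DecidableEq n] (A : Matrix n n ℂ) :
    n → ℝ :=
  fun i => Real.sqrt ((Matrix.isHermitian_conjTranspose_mul_self A).eigenvalues i)

/-!
Let `M = tr₂ C` have singular value decomposition `M vⱼ = σⱼ uⱼ`. Then
`σⱼ = ⟪uⱼ, M vⱼ⟫ = ∑ₛ ⟪uⱼ ⊗ eₛ, C (vⱼ ⊗ eₛ)⟫`, so a sum of `k` singular values of `M` is bounded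
by a sum of `k·d₂` terms `|⟪xₚ, C yₚ⟫|` over orthonormal families `x`, `y`. By Ky Fan's maximum
principle such a sum is at most the sum of the `k·d₂` largest singular values of `C`; that is the
sum of the first `k` blocks of `d₂` consecutive entries of the decreasing list `μ`, hence at most
the sum of the `k` largest blocks. Ky Fan's bound itself
comes from the singular value decomposition `C vᵢ = σᵢ uᵢ` and AM–GM: `|⟪x, C y⟫|` is at most
`∑ᵢ σᵢ (|⟪x, uᵢ⟫|² + |⟪y, vᵢ⟫|²) / 2`, and by Bessel's inequality these weights form a doubly
substochastic array. For `tr₁` the same argument runs with the tensor factors swapped.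
-/

namespace Finset

variable {ι : Type*} {x : ι → ℝ}

theorem sum_le_sum_of_card_eq_of_forall_le [DecidableEq ι] {A F : Finset ι}
    (hcard : A.card = F.card) (hF : ∀ i ∈ F, ∀ j ∉ F, x j ≤ x i) :
    ∑ i ∈ A, x i ≤ ∑ i ∈ F, x i := by
  rw [← sum_inter_add_sum_sdiff A F, ← sum_inter_add_sum_sdiff F A, inter_comm F A]
  refine add_le_add le_rfl ?_
  rcases (A \ F).eq_empty_or_nonempty with hAF | hAF
  · have hFA : F \ A = ∅ := card_eq_zero.1 (by rw [← card_sdiff_comm hcard, hAF, card_empty])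
    simp [hAF, hFA]
  obtain ⟨j, hj, hmax⟩ := exists_max_image _ x hAF
  calc ∑ i ∈ A \ F, x i ≤ #(A \ F) • x j := sum_le_card_nsmul _ _ _ hmax
    _ = #(F \ A) • x j := by rw [card_sdiff_comm hcard]
    _ ≤ ∑ i ∈ F \ A, x i :=
      card_nsmul_le_sum _ _ _ fun i hi => hF i (mem_sdiff.1 hi).1 j (mem_sdiff.1 hj).2

end Finset

section MaxSum

open Finset

variable {ι : Type*} [Fintype ι] (x : ι → ℝ)

theorem bddAbove_maxSum_set (k : ℕ) :
    BddAbove {s : ℝ | ∃ A : Finset ι, A.card = k ∧ s = ∑ i ∈ A, x i} :=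
  ((Set.finite_range fun A : Finset ι => ∑ i ∈ A, x i).subset
    (by rintro _ ⟨A, -, rfl⟩; exact ⟨A, rfl⟩)).bddAbove

theorem sum_le_maxSum (A : Finset ι) : ∑ i ∈ A, x i ≤ maxSum x A.card :=
  le_csSup (bddAbove_maxSum_set x _) ⟨A, rfl, rfl⟩

variable {x}

theorem maxSum_le {k : ℕ} {B : ℝ} (hk : k ≤ Fintype.card ι)
    (hB : ∀ A : Finset ι, A.card = k → ∑ i ∈ A, x i ≤ B) : maxSum x k ≤ B := by
  obtain ⟨A, -, hA⟩ := exists_subset_card_eq (s := (univ : Finset ι)) (by simpa using hk)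
  exact csSup_le ⟨_, A, hA, rfl⟩ fun _ ⟨A, hA, hs⟩ => hs ▸ hB A hA

theorem maxSum_of_card_lt {k : ℕ} (hk : Fintype.card ι < k) : maxSum x k = 0 := by
  have hempty : {s : ℝ | ∃ A : Finset ι, A.card = k ∧ s = ∑ i ∈ A, x i} = ∅ :=
    Set.eq_empty_of_forall_notMem fun _ ⟨A, hA, _⟩ => (hA ▸ card_le_univ A).not_gt hk
  rw [maxSum, hempty, Real.sSup_empty]

theorem maxSum_comp_equiv {κ : Type*} [Fintype κ] (g : κ ≃ ι) (k : ℕ) :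
    maxSum (x ∘ g) k = maxSum x k := by
  classical
  refine congrArg sSup (Set.ext fun s => ⟨?_, ?_⟩)
  · rintro ⟨A, hA, rfl⟩
    exact ⟨A.map g.toEmbedding, by simpa using hA, by simp⟩
  · rintro ⟨A, hA, rfl⟩
    exact ⟨A.map g.symm.toEmbedding, by simpa using hA, by simp⟩

theorem maxSum_eq_sum_of_forall_le {F : Finset ι} (hF : ∀ i ∈ F, ∀ j ∉ F, x j ≤ x i) :
    maxSum x F.card = ∑ i ∈ F, x i := by
  classical
  refine le_antisymm (maxSum_le (card_le_univ F) fun A hA => ?_) (sum_le_maxSum x F)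
  exact sum_le_sum_of_card_eq_of_forall_le hA hF

theorem exists_card_eq_forall_le {k : ℕ} (hk : k ≤ Fintype.card ι) :
    ∃ F : Finset ι, F.card = k ∧ ∀ i ∈ F, ∀ j ∉ F, x j ≤ x i := by
  classical
  obtain ⟨F, hF, hmax⟩ := exists_max_image (univ.powersetCard k) (fun A => ∑ i ∈ A, x i)
    (powersetCard_nonempty.2 (by simpa using hk))
  have hFk := (mem_powersetCard.1 hF).2
  refine ⟨F, hFk, fun i hi j hj => ?_⟩
  have hswap := hmax (insert j (F.erase i)) <| mem_powersetCard.2 ⟨subset_univ _, by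
    rw [card_insert_of_notMem (fun h => hj (mem_of_mem_erase h)), card_erase_of_mem hi, hFk]
    have := card_pos.2 ⟨i, hi⟩
    omega⟩
  rw [sum_insert (fun h => hj (mem_of_mem_erase h)), sum_erase_eq_sub hi] at hswap
  linarith

theorem sum_mul_le_maxSum {σ c : ι → ℝ} (hσ : ∀ i, 0 ≤ σ i) (hc₀ : ∀ i, 0 ≤ c i)
    (hc₁ : ∀ i, c i ≤ 1) {k : ℕ} (hk : k ≤ Fintype.card ι) (hc : ∑ i, c i ≤ k) :
    ∑ i, σ i * c i ≤ maxSum σ k := by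
  classical
  obtain ⟨T, rfl, hT⟩ := exists_card_eq_forall_le (x := σ) hk
  refine le_trans ?_ (sum_le_maxSum σ T)
  rcases T.eq_empty_or_nonempty with rfl | hTne
  · have hc0 : ∀ i, c i = 0 := fun i => (sum_eq_zero_iff_of_nonneg fun i _ => hc₀ i).1
      (le_antisymm (by simpa using hc) (sum_nonneg fun i _ => hc₀ i)) i (mem_univ i)
    simp [hc0]
  obtain ⟨i₀, hi₀, hmin⟩ := exists_min_image T σ hTne
  -- `σ i₀` separates the values of `σ` on `T` from those off `T`
  have hsep : ∀ i, (σ i - σ i₀) * (c i - if i ∈ T then 1 else 0) ≤ 0 := by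
    intro i
    split_ifs with hi
    · exact mul_nonpos_of_nonneg_of_nonpos (sub_nonneg.2 (hmin i hi)) (sub_nonpos.2 (hc₁ i))
    · exact mul_nonpos_of_nonpos_of_nonneg (sub_nonpos.2 (hT i₀ hi₀ i hi))
        (by simpa using hc₀ i)
  have hsum := sum_nonpos fun i (_ : i ∈ univ) => hsep i
  simp only [mul_sub, sub_mul, sum_sub_distrib, mul_ite, mul_one, mul_zero, sum_ite_mem,
    univ_inter, ← mul_sum, sum_const, nsmul_eq_mul] at hsum
  nlinarith [hσ i₀]

end MaxSum

open scoped ComplexInnerProductSpace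

section SingularValueDecomposition

variable {n : Type*} [Fintype n] [DecidableEq n]

theorem singvals_nonneg (A : Matrix n n ℂ) (i : n) : 0 ≤ singvals A i :=
  Real.sqrt_nonneg _

theorem inner_toEuclideanLin_toEuclideanLin (A : Matrix n n ℂ) (x y : EuclideanSpace ℂ n) :
    ⟪A.toEuclideanLin x, A.toEuclideanLin y⟫ = ⟪x, (Aᴴ * A).toEuclideanLin y⟫ := by
  rw [← LinearMap.adjoint_inner_right, ← Matrix.toEuclideanLin_conjTranspose_eq_adjoint,
    Matrix.toLpLin_mul_same, LinearMap.comp_apply]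

theorem exists_singularValueDecomposition (A : Matrix n n ℂ) :
    ∃ u v : OrthonormalBasis n ℂ (EuclideanSpace ℂ n),
      ∀ i, A.toEuclideanLin (v i) = (singvals A i : ℂ) • u i := by
  have hA := Matrix.isHermitian_conjTranspose_mul_self A
  set v := hA.eigenvectorBasis
  set σ := singvals A
  have hgram : ∀ i j, ⟪A.toEuclideanLin (v i), A.toEuclideanLin (v j)⟫ =
      if i = j then ((σ j ^ 2 : ℝ) : ℂ) else 0 := by
    intro i j
    have heig : (Aᴴ * A).toEuclideanLin (v j) = (hA.eigenvalues j : ℂ) • v j := by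
      ext a
      simpa [Matrix.toLpLin_apply, Complex.real_smul] using
        congrFun (hA.mulVec_eigenvectorBasis j) a
    have hσ : σ j ^ 2 = hA.eigenvalues j :=
      Real.sq_sqrt ((Matrix.posSemidef_conjTranspose_mul_self A).eigenvalues_nonneg j)
    rw [inner_toEuclideanLin_toEuclideanLin, heig, inner_smul_right,
      orthonormal_iff_ite.1 v.orthonormal, hσ]
    split_ifs <;> simp
  set w : n → EuclideanSpace ℂ n := fun i => (σ i : ℂ)⁻¹ • A.toEuclideanLin (v i)
  have hw : Orthonormal ℂ ({i | σ i ≠ 0}.domRestrict w) := by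
    rw [orthonormal_iff_ite]
    rintro ⟨i, hi⟩ ⟨j, hj⟩
    simp only [Set.domRestrict, w, inner_smul_left, inner_smul_right, hgram, Subtype.mk.injEq]
    split_ifs with hij
    · subst hij
      have : (σ i : ℂ) ≠ 0 := by exact_mod_cast hi
      simp only [Complex.ofReal_pow, map_inv₀, Complex.conj_ofReal]
      field_simp
    · simp
  obtain ⟨u, hu⟩ := hw.exists_orthonormalBasis_extension_of_card_eq (by simp)
  refine ⟨u, v, fun i => ?_⟩
  by_cases hσ : σ i = 0
  · rw [hσ, Complex.ofReal_zero, zero_smul]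
    exact inner_self_eq_zero.1 (by rw [hgram]; simp [hσ])
  · have : (σ i : ℂ) ≠ 0 := by exact_mod_cast hσ
    rw [hu i hσ, smul_smul, mul_inv_cancel₀ this, one_smul]

end SingularValueDecomposition

theorem Orthonormal.sum_norm_inner_sq_le_one {𝕜 E ι : Type*} [RCLike 𝕜] [NormedAddCommGroup E]
    [InnerProductSpace 𝕜 E] [Fintype ι] {f : ι → E} (hf : Orthonormal 𝕜 f) {z : E}
    (hz : ‖z‖ = 1) : ∑ i, ‖(inner 𝕜 (f i) z : 𝕜)‖ ^ 2 ≤ 1 := by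
  simpa [hz] using hf.sum_inner_products_le (s := Finset.univ) (x := z)

section KyFan

open Finset

variable {n : Type*} [Fintype n] [DecidableEq n]

theorem sum_norm_inner_toEuclideanLin_le_maxSum (A : Matrix n n ℂ) {κ : Type*} [Fintype κ]
    {x y : κ → EuclideanSpace ℂ n} (hx : Orthonormal ℂ x) (hy : Orthonormal ℂ y) :
    ∑ k, ‖⟪x k, A.toEuclideanLin (y k)⟫‖ ≤ maxSum (singvals A) (Fintype.card κ) := by
  obtain ⟨u, v, huv⟩ := exists_singularValueDecomposition A
  set σ := singvals A
  have hσ : ∀ i, 0 ≤ σ i := singvals_nonneg A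
  have hexpand : ∀ k, ⟪x k, A.toEuclideanLin (y k)⟫ = ∑ i, ⟪v i, y k⟫ * σ i * ⟪x k, u i⟫ := by
    intro k
    conv_lhs => rw [← v.sum_repr' (y k)]
    simp only [map_sum, map_smul, huv, smul_smul, inner_sum, inner_smul_right]
  set c : n → ℝ := fun i => ∑ k, (‖⟪x k, u i⟫‖ ^ 2 + ‖⟪y k, v i⟫‖ ^ 2) / 2
  have hterm : ∀ k, ‖⟪x k, A.toEuclideanLin (y k)⟫‖ ≤
      ∑ i, σ i * ((‖⟪x k, u i⟫‖ ^ 2 + ‖⟪y k, v i⟫‖ ^ 2) / 2) := by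
    intro k
    rw [hexpand]
    refine (norm_sum_le _ _).trans (sum_le_sum fun i _ => ?_)
    rw [norm_mul, norm_mul, Complex.norm_real, Real.norm_of_nonneg (hσ i), norm_inner_symm]
    nlinarith [mul_nonneg (hσ i) (sq_nonneg (‖⟪x k, u i⟫‖ - ‖⟪y k, v i⟫‖))]
  have hc₀ : ∀ i, 0 ≤ c i := fun i => sum_nonneg fun k _ => by positivity
  have hc₁ : ∀ i, c i ≤ 1 := by
    intro i
    have hxu := hx.sum_norm_inner_sq_le_one (u.orthonormal.1 i)
    have hyv := hy.sum_norm_inner_sq_le_one (v.orthonormal.1 i)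
    simp only [c, ← sum_div, sum_add_distrib]
    linarith
  have hc : ∑ i, c i ≤ Fintype.card κ := by
    rw [sum_comm]
    refine (sum_le_card_nsmul _ _ 1 fun k _ => ?_).trans (by simp)
    have hux := u.orthonormal.sum_norm_inner_sq_le_one (hx.1 k)
    have hvy := v.orthonormal.sum_norm_inner_sq_le_one (hy.1 k)
    simp only [norm_inner_symm (x k), norm_inner_symm (y k)]
    rw [← sum_div, sum_add_distrib]
    linarith
  have hcard : Fintype.card κ ≤ Fintype.card n := by
    simpa using hx.linearIndependent.fintype_card_le_finrank
  calc ∑ k, ‖⟪x k, A.toEuclideanLin (y k)⟫‖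
      ≤ ∑ k, ∑ i, σ i * ((‖⟪x k, u i⟫‖ ^ 2 + ‖⟪y k, v i⟫‖ ^ 2) / 2) :=
        sum_le_sum fun k _ => hterm k
    _ = ∑ i, σ i * c i := by simp only [c, mul_sum]; exact sum_comm
    _ ≤ maxSum σ (Fintype.card κ) := sum_mul_le_maxSum hσ hc₀ hc₁ hcard hc

end KyFan

section PartialTrace

open Finset

variable {m ρ n : Type*} [Fintype m] [Fintype ρ] [Fintype n] [DecidableEq ρ]

def partialTrace (e : n ≃ m × ρ) (C : Matrix n n ℂ) : Matrix m m ℂ :=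
  Matrix.of fun i j => ∑ s, C (e.symm (i, s)) (e.symm (j, s))

/-- The vector `u ⊗ eₛ`, transported to `n` along `e`. -/
def tensorSingle (e : n ≃ m × ρ) (u : EuclideanSpace ℂ m) (s : ρ) : EuclideanSpace ℂ n :=
  WithLp.toLp 2 fun p => if (e p).2 = s then u (e p).1 else 0

variable (e : n ≃ m × ρ)

theorem inner_tensorSingle (u v : EuclideanSpace ℂ m) (s t : ρ) :
    ⟪tensorSingle e u s, tensorSingle e v t⟫ = if s = t then ⟪u, v⟫ else 0 := by
  simp only [tensorSingle, EuclideanSpace.inner_eq_star_dotProduct, dotProduct]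
  rw [← e.symm.sum_comp, Fintype.sum_prod_type]
  by_cases h : s = t <;> simp [h, Ne.symm]

theorem inner_partialTrace [DecidableEq m] [DecidableEq n] (C : Matrix n n ℂ)
    (u v : EuclideanSpace ℂ m) :
    ⟪u, (partialTrace e C).toEuclideanLin v⟫ =
      ∑ s, ⟪tensorSingle e u s, C.toEuclideanLin (tensorSingle e v s)⟫ := by
  simp only [tensorSingle, partialTrace, EuclideanSpace.inner_eq_star_dotProduct, dotProduct,
    Matrix.toLpLin_apply, Matrix.mulVec]
  simp only [← e.symm.sum_comp, Equiv.apply_symm_apply, Fintype.sum_prod_type]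
  simp only [Matrix.of_apply, sum_mul, Pi.star_apply, RCLike.star_def, apply_ite (starRingEnd ℂ),
    map_zero, mul_ite, mul_zero, Equiv.apply_symm_apply, sum_ite_eq', mem_univ, if_true]
  conv_rhs => rw [Finset.sum_comm]
  exact sum_congr rfl fun i _ => sum_comm

theorem orthonormal_tensorSingle {ι : Type*} {u : ι → EuclideanSpace ℂ m}
    (hu : Orthonormal ℂ u) : Orthonormal ℂ fun p : ι × ρ => tensorSingle e (u p.1) p.2 := by
  classical
  rw [orthonormal_iff_ite] at hu ⊢
  rintro ⟨i, s⟩ ⟨j, t⟩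
  simp only [inner_tensorSingle, hu, Prod.mk.injEq]
  split_ifs <;> simp_all

theorem maxSum_singvals_partialTrace_le [DecidableEq m] [DecidableEq n] (C : Matrix n n ℂ)
    {k : ℕ} (hk : k ≤ Fintype.card m) :
    maxSum (singvals (partialTrace e C)) k ≤ maxSum (singvals C) (k * Fintype.card ρ) := by
  refine maxSum_le hk fun T hT => ?_
  obtain ⟨u, v, huv⟩ := exists_singularValueDecomposition (partialTrace e C)
  have hdiag : ∀ j, singvals (partialTrace e C) j =
      RCLike.re ⟪u j, (partialTrace e C).toEuclideanLin (v j)⟫ := by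
    intro j
    simp [huv, u.orthonormal.1 j]
  have hT' : Function.Injective ((↑) : T → m) := Subtype.val_injective
  have hu := orthonormal_tensorSingle e (u.orthonormal.comp _ hT')
  have hv := orthonormal_tensorSingle e (v.orthonormal.comp _ hT')
  set x : m → ρ → EuclideanSpace ℂ n := fun j => tensorSingle e (u j)
  set y : m → ρ → EuclideanSpace ℂ n := fun j => tensorSingle e (v j)
  calc ∑ j ∈ T, singvals (partialTrace e C) j
      = ∑ j ∈ T, ∑ s, RCLike.re ⟪x j s, C.toEuclideanLin (y j s)⟫ := by
        simp only [hdiag, inner_partialTrace, map_sum, x, y]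
    _ ≤ ∑ j ∈ T, ∑ s, ‖⟪x j s, C.toEuclideanLin (y j s)⟫‖ := by
        gcongr
        exact RCLike.re_le_norm _
    _ = ∑ p : T × ρ, ‖⟪x p.1 p.2, C.toEuclideanLin (y p.1 p.2)⟫‖ := by
        rw [Fintype.sum_prod_type, ← sum_coe_sort T]
    _ ≤ maxSum (singvals C) (Fintype.card (T × ρ)) :=
        sum_norm_inner_toEuclideanLin_le_maxSum C hu hv
    _ = maxSum (singvals C) (k * Fintype.card ρ) := by simp [hT]

end PartialTrace

open Finset in
theorem maxSum_le_maxSum_blockSum {a b : ℕ} {μ : Fin (a * b) → ℝ} (hμ : Antitone μ) {k : ℕ}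
    (hk : k ≤ a) :
    maxSum μ (k * b) ≤ maxSum (fun j : Fin a => ∑ s : Fin b, μ (finProdFinEquiv (j, s))) k := by
  set J : Finset (Fin a) := univ.map (Fin.castLEEmb hk)
  set F : Finset (Fin (a * b)) := (J ×ˢ univ).map finProdFinEquiv.toEmbedding
  have hF : ∀ p ∈ F, ∀ q ∉ F, μ q ≤ μ p := by
    intro p hp q hq
    obtain ⟨⟨j', s⟩, hjs, rfl⟩ := mem_map.1 hp
    obtain ⟨j, -, rfl⟩ := mem_map.1 (mem_product.1 hjs).1
    obtain ⟨⟨i, t⟩, rfl⟩ := finProdFinEquiv.surjective q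
    have hi : k ≤ (i : ℕ) := by
      by_contra! hi
      exact hq (mem_map_of_mem _
        (mem_product.2 ⟨mem_map.2 ⟨⟨i, hi⟩, mem_univ _, rfl⟩, mem_univ t⟩))
    refine hμ (Fin.le_def.2 ?_)
    simp only [Equiv.coe_toEmbedding, Fin.castLEEmb_apply, finProdFinEquiv_apply_val,
      Fin.val_castLE]
    nlinarith [Nat.mul_le_mul_left b (show (j : ℕ) + 1 ≤ i by omega), s.isLt]
  have hFcard : F.card = k * b := by simp [F, J]
  calc maxSum μ (k * b) = ∑ p ∈ F, μ p := by rw [← hFcard, maxSum_eq_sum_of_forall_le hF]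
    _ = ∑ j ∈ J, ∑ s : Fin b, μ (finProdFinEquiv (j, s)) := by rw [sum_map, sum_product]; rfl
    _ ≤ _ := by simpa [J] using sum_le_maxSum (fun j => ∑ s : Fin b, μ (finProdFinEquiv (j, s))) J

theorem weakMajorizes_singvals_partialTrace {n : Type*} [Fintype n] [DecidableEq n] {a b : ℕ}
    (e : n ≃ Fin a × Fin b) (C : Matrix n n ℂ) {μ : Fin (a * b) → ℝ} (hμ : Antitone μ)
    (g : Fin (a * b) ≃ n) (hg : ∀ k, μ k = singvals C (g k)) :
    WeakMajorizes (singvals (partialTrace e C))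
      (fun j : Fin a => ∑ s : Fin b, μ (finProdFinEquiv (j, s))) := by
  intro k
  rcases le_or_gt k a with hk | hk
  · calc maxSum (singvals (partialTrace e C)) k ≤ maxSum (singvals C) (k * b) := by
          simpa using maxSum_singvals_partialTrace_le e C (k := k) (by simpa using hk)
      _ = maxSum μ (k * b) := by rw [show μ = singvals C ∘ g from funext hg, maxSum_comp_equiv]
      _ ≤ _ := maxSum_le_maxSum_blockSum hμ hk
  · rw [maxSum_of_card_lt (by simpa using hk), maxSum_of_card_lt (by simpa using hk)]

theorem singular_values_weak_majorization (d1 d2 : ℕ)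
    (C : Matrix (Fin d1 × Fin d2) (Fin d1 × Fin d2) ℂ)
    -- `μ` lists the singular values of `C` in decreasing order
    (μ : Fin (d1 * d2) → ℝ) (hμ : Antitone μ)
    (g : Fin (d1 * d2) ≃ Fin d1 × Fin d2) (hg : ∀ k, μ k = singvals C (g k)) :
    WeakMajorizes (singvals (ptrace2 C))
      (fun j : Fin d1 => ∑ s : Fin d2, μ (finProdFinEquiv (j, s))) ∧
    WeakMajorizes (singvals (ptrace1 C))
      (fun i : Fin d2 => ∑ s : Fin d1, μ (finCongr (Nat.mul_comm d2 d1) (finProdFinEquiv (i, s)))) := by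
  have hμ' : Antitone (μ ∘ finCongr (Nat.mul_comm d2 d1)) := hμ.comp_monotone fun _ _ h => h
  -- `(· :)` elaborates each part before matching it with the goal, which avoids a slow
  -- unification of `ptrace1 C` against `partialTrace ?e C`
  exact ⟨(weakMajorizes_singvals_partialTrace (Equiv.refl _) C hμ g hg :),
    (weakMajorizes_singvals_partialTrace (Equiv.prodComm _ _) C hμ' ((finCongr _).trans g)
      fun k => hg _ :)⟩
end
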